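/- arXiv:2402.01478 — 8 statements merged into one kernel-verified Lean document; each statement's English description precedes it below -/
import Mathlib

section
/- Let h(j) = a*j^2 + b*j + e with integers a > 0, e > 0, a + b < 0, and b^2 - 4*a*e > 0. Then h(j) ≥ 0 for all integers j ≥ 0 if and only if b^2 - 4*a*e ≤ a^2 and the interval [(-b - √(b^2-4ae))/(2a), (-b + √(b^2-4ae))/(2a)] is contained in [ℓ, ℓ+1], where ℓ is the floor of (-b - √(b^2-4ae))/(2a). -/
theorem stmt_3 (a b e : ℤ) (ha : 0 < a) (he : 0 < e) (hab : a + b < 0)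
    (hd : 0 < b ^ 2 - 4 * a * e)
    (h : ℕ → ℤ) (hh : ∀ j : ℕ, h j = a * j ^ 2 + b * j + e) :
    (∀ j : ℕ, 0 ≤ h j) ↔
      (b ^ 2 - 4 * a * e ≤ a ^ 2 ∧
        Set.Icc ((-(b : ℝ) - Real.sqrt ((b : ℝ) ^ 2 - 4 * a * e)) / (2 * a))
            ((-(b : ℝ) + Real.sqrt ((b : ℝ) ^ 2 - 4 * a * e)) / (2 * a)) ⊆
          Set.Icc
            ((⌊(-(b : ℝ) - Real.sqrt ((b : ℝ) ^ 2 - 4 * a * e)) / (2 * a)⌋ : ℝ))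
            ((⌊(-(b : ℝ) - Real.sqrt ((b : ℝ) ^ 2 - 4 * a * e)) / (2 * a)⌋ : ℝ) + 1)) := by
  have hA : (0:ℝ) < (a:ℝ) := by exact_mod_cast ha
  have hE : (0:ℝ) < (e:ℝ) := by exact_mod_cast he
  have hB : (a:ℝ) + (b:ℝ) < 0 := by exact_mod_cast hab
  have hDpos : (0:ℝ) < (b:ℝ)^2 - 4*a*e := by
    have : ((b^2 - 4*a*e : ℤ) : ℝ) > 0 := by exact_mod_cast hd
    push_cast at this; linarith
  set s := Real.sqrt ((b : ℝ) ^ 2 - 4 * a * e) with hs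
  have hs0 : 0 < s := Real.sqrt_pos.mpr hDpos
  have hs2 : s^2 = (b:ℝ)^2 - 4*a*e := Real.sq_sqrt hDpos.le
  have hsb : s < -(b:ℝ) := by nlinarith
  set r₁ := (-(b : ℝ) - s) / (2 * a) with hr1
  set r₂ := (-(b : ℝ) + s) / (2 * a) with hr2
  have h2a : (0:ℝ) < 2*a := by linarith
  have h2a' : (2*(a:ℝ)) ≠ 0 := ne_of_gt h2a
  have hr1pos : 0 < r₁ := div_pos (by linarith) h2a
  have hr12 : r₁ < r₂ := (div_lt_div_iff_of_pos_right h2a).mpr (by linarith)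
  have key : ∀ x : ℝ, (a:ℝ)*x^2 + b*x + e = a*(x - r₁)*(x - r₂) := by
    intro x
    rw [hr1, hr2]
    field_simp
    ring_nf
    nlinarith [hs2]
  set ℓ := ⌊r₁⌋ with hℓ
  have hfl : (ℓ:ℝ) ≤ r₁ := Int.floor_le r₁
  have hfl2 : r₁ < (ℓ:ℝ) + 1 := Int.lt_floor_add_one r₁
  have hℓ0 : 0 ≤ ℓ := Int.le_floor.mpr (by exact_mod_cast hr1pos.le)
  constructor
  · intro H
    have hr2le : r₂ ≤ (ℓ:ℝ) + 1 := by
      by_contra h'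
      push_neg at h'
      set n : ℕ := (ℓ + 1).toNat with hn
      have hcast : ((n:ℤ):ℝ) = (ℓ:ℝ) + 1 := by
        rw [hn]; push_cast [Int.toNat_of_nonneg (by omega : (0:ℤ) ≤ ℓ + 1)]; ring
      have hH := H n
      rw [hh n] at hH
      have hHr : (0:ℝ) ≤ (a:ℝ)*(n:ℝ)^2 + b*(n:ℝ) + e := by exact_mod_cast hH
      have hx : ((n:ℝ)) = (ℓ:ℝ) + 1 := by exact_mod_cast hcast
      rw [hx, key ((ℓ:ℝ)+1)] at hHr
      have p1 : (0:ℝ) < (ℓ:ℝ) + 1 - r₁ := by linarith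
      have p2 : (ℓ:ℝ) + 1 - r₂ < 0 := by linarith
      have := mul_neg_of_pos_of_neg (mul_pos hA p1) p2
      linarith
    have hdle : b ^ 2 - 4 * a * e ≤ a ^ 2 := by
      have h1 : r₂ - r₁ ≤ 1 := by linarith
      have h2 : s ≤ (a:ℝ) := by
        have : r₂ - r₁ = s / a := by rw [hr1, hr2]; field_simp; ring
        rw [this] at h1
        calc s = (s / a) * a := by field_simp
        _ ≤ 1 * a := by apply mul_le_mul_of_nonneg_right h1 hA.le
        _ = a := one_mul _
      have : (b:ℝ)^2 - 4*a*e ≤ (a:ℝ)^2 := by nlinarith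
      have : ((b^2 - 4*a*e : ℤ) : ℝ) ≤ ((a^2 : ℤ) : ℝ) := by push_cast; linarith
      exact_mod_cast this
    refine ⟨hdle, fun x hx => ⟨le_trans hfl hx.1, le_trans hx.2 hr2le⟩⟩
  · rintro ⟨-, hsub⟩ j
    by_contra hneg
    push_neg at hneg
    rw [hh j] at hneg
    have hnr : (a:ℝ)*(j:ℝ)^2 + b*(j:ℝ) + e < 0 := by exact_mod_cast hneg
    rw [key (j:ℝ)] at hnr
    have hj1 : r₁ < (j:ℝ) := by
      by_contra hc
      push_neg at hc
      nlinarith [mul_nonneg (mul_nonneg hA.le (sub_nonneg.mpr hc)) (sub_nonneg.mpr (hc.trans hr12.le))]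
    have hj2 : (j:ℝ) < r₂ := by
      by_contra hc
      push_neg at hc
      nlinarith [mul_nonneg (mul_nonneg hA.le (sub_nonneg.mpr (hr12.le.trans hc))) (sub_nonneg.mpr hc)]
    have hr2le : r₂ ≤ (ℓ:ℝ) + 1 := (hsub ⟨hr12.le, le_refl _⟩).2
    have : (ℓ:ℝ) < (j:ℝ) := lt_of_le_of_lt hfl hj1
    have hℓj : ℓ < (j:ℤ) := by exact_mod_cast this
    have : ((ℓ:ℤ) + 1 : ℝ) ≤ (j:ℝ) := by exact_mod_cast hℓj
    push_cast at this
    linarith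
end

section
/- Let h(j) = a*j^2 + b*j + e with integers a > 0, e > 0, and h(j) ≥ 0 for all j ≥ 0. If a + b ≥ e, then the Hilbert depth of h is at least 2, i.e., β_k^2(h) := ∑_{j=0}^k (-1)^{k-j} C(2-j, k-j) h(j) ≥ 0 for k = 0, 1, 2. -/
open Finset

/-- `β_k^d(h)`; the natural subtraction `d - j` does not truncate for `j ≤ k ≤ d`. -/
def hilbertBeta (d k : ℕ) (h : ℕ → ℤ) : ℤ :=
  ∑ j ∈ range (k + 1), (-1 : ℤ) ^ (k - j) * (Nat.choose (d - j) (k - j)) * h j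

section DepthTwo

variable (h : ℕ → ℤ)

theorem hilbertBeta_two_zero : hilbertBeta 2 0 h = h 0 := by
  simp [hilbertBeta]

theorem hilbertBeta_two_one : hilbertBeta 2 1 h = h 1 - 2 * h 0 := by
  simp [hilbertBeta, sum_range_succ, sub_eq_neg_add]

theorem hilbertBeta_two_two : hilbertBeta 2 2 h = h 0 - h 1 + h 2 := by
  simp [hilbertBeta, sum_range_succ, sub_eq_add_neg]

end DepthTwo

theorem stmt_4_general (a b e : ℤ) (ha : 0 < a) (he : 0 < e)
    (h : ℕ → ℤ) (hh : ∀ j : ℕ, h j = a * j ^ 2 + b * j + e)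
    (habe : e ≤ a + b) :
    ∀ k : ℕ, k ≤ 2 →
      0 ≤ ∑ j ∈ Finset.range (k + 1), (-1 : ℤ) ^ (k - j) * (Nat.choose (2 - j) (k - j)) * h j := by
  intro k hk
  change 0 ≤ hilbertBeta 2 k h
  have h0 : h 0 = e := by simp [hh]
  have h1 : h 1 = a + b + e := by simp [hh]
  have h2 : h 2 = 4 * a + 2 * b + e := by rw [hh]; push_cast; ring
  interval_cases k
  · rw [hilbertBeta_two_zero]; omega
  · rw [hilbertBeta_two_one]; omega
  · rw [hilbertBeta_two_two]; omega

theorem stmt_4 (a b e : ℤ) (ha : 0 < a) (he : 0 < e)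
    (h : ℕ → ℤ) (hh : ∀ j : ℕ, h j = a * j ^ 2 + b * j + e)
    (hnn : ∀ j : ℕ, 0 ≤ h j) (habe : e ≤ a + b) :
    ∀ k : ℕ, k ≤ 2 →
      0 ≤ ∑ j ∈ Finset.range (k + 1), (-1 : ℤ) ^ (k - j) * (Nat.choose (2 - j) (k - j)) * h j :=
  stmt_4_general a b e ha he h hh habe
end

section
/- Let h(j) = a*j^2 + b*j + e be a function from ℤ≥0 to ℤ≥0 with integers a > 0, e > 0, b < 0, and b^2 ≤ 4*a*e. Then hdepth(h) ≤ 11, i.e., for every d ≥ 12 there exists 0 ≤ k ≤ d with ∑_{j=0}^k (-1)^{k-j} C(d-j, k-j) h(j) < 0. -/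
/-!
Only `k = 1` and `k = 2` are needed. The `k = 1` sum is `h 1 - d h 0 = a + b + e - d e`; if it is
nonnegative then `a ≥ -b + (d - 1) e`. Twice the `k = 2` sum is
`e (d² - 3d + 4) - 2 (d - 5) a - 2 (d - 3) b`, which decreases in `a`. When the slope `-b` is small,
`-4b < e (d² - 9d + 6)`, the bound `a ≥ -b + (d - 1) e` already makes it negative; when `-b` is large,
`4ae ≥ b²` turns it into a quadratic in `b` that is negative for `d ≥ 12`.
-/

open Finset

def altBinomialSum {R : Type*} [CommRing R] (h : ℕ → R) (d k : ℕ) : R :=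
  ∑ j ∈ range (k + 1), (-1 : R) ^ (k - j) * (d - j).choose (k - j) * h j

section CommRing

variable {R : Type*} [CommRing R] (h : ℕ → R) (d : ℕ)

theorem altBinomialSum_one : altBinomialSum h d 1 = h 1 - d * h 0 := by
  simp only [altBinomialSum, Nat.reduceAdd, sum_range_succ, range_one, sum_singleton, tsub_zero,
    pow_one, Nat.choose_one_right, tsub_self, pow_zero, Nat.choose_zero_right, Nat.cast_one]
  ring

theorem two_mul_altBinomialSum_two (hd : 1 ≤ d) :
    2 * altBinomialSum h d 2 = d * (d - 1) * h 0 - 2 * (d - 1) * h 1 + 2 * h 2 := by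
  have hchoose : 2 * ((d.choose 2 : ℕ) : R) = d * (d - 1) := by
    rw [← Nat.cast_ofNat, ← Nat.cast_mul, Nat.choose_two_right,
      Nat.mul_div_cancel' d.even_mul_pred_self.two_dvd]
    push_cast [hd]
    ring
  simp only [altBinomialSum, sum_range_succ, sum_range_zero, tsub_zero, Nat.add_one_sub_one, tsub_self,
    pow_one, pow_zero, Nat.choose_one_right, Nat.choose_zero_right, Nat.cast_sub hd, Nat.cast_one]
  linear_combination h 0 * hchoose

end CommRing

variable {R : Type*} [CommRing R] [LinearOrder R] [IsStrictOrderedRing R]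

theorem quadratic_secondSum_neg_of_slope_lt {a b e D : R} (hD : 5 ≤ D)
    (hb : -4 * b < e * (D ^ 2 - 9 * D + 6)) (h1 : D * e ≤ a + b + e) :
    D * (D - 1) * e - 2 * (D - 1) * (a + b + e) + 2 * (4 * a + 2 * b + e) < 0 := by
  nlinarith [mul_nonneg (by linarith : (0 : R) ≤ 2 * D - 10) (sub_nonneg.2 h1)]

theorem quadratic_secondSum_neg_of_slope_ge {a b e D : R} (he : 0 < e) (hdisc : b ^ 2 ≤ 4 * a * e)
    (hD : 12 ≤ D) (hb : e * (D ^ 2 - 9 * D + 6) ≤ -4 * b) :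
    D * (D - 1) * e - 2 * (D - 1) * (a + b + e) + 2 * (4 * a + 2 * b + e) < 0 := by
  have hm : 0 ≤ D ^ 2 - 9 * D + 6 := by nlinarith
  have hr : 0 < (2 * D - 10) * (D ^ 2 - 9 * D + 6) - 32 * D + 96 := by
    nlinarith [mul_nonneg (by linarith : (0 : R) ≤ D - 12) hm]
  have hpoly : 64 * (D ^ 2 - 3 * D + 4) <
      (D ^ 2 - 9 * D + 6) * ((2 * D - 10) * (D ^ 2 - 9 * D + 6) - 32 * D + 96) := by
    have ht : 0 ≤ D - 12 := by linarith
    nlinarith [pow_nonneg ht 2, pow_nonneg ht 3, pow_nonneg ht 4, pow_nonneg ht 5]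
  have hx : 0 ≤ -4 * b := (mul_nonneg he.le hm).trans hb
  have hlin : e * ((2 * D - 10) * (D ^ 2 - 9 * D + 6) - 32 * D + 96) ≤
      (2 * D - 10) * (-4 * b) - 16 * e * (2 * D - 6) := by nlinarith
  have hquad : e * e * (64 * (D ^ 2 - 3 * D + 4)) <
      (-4 * b) * ((2 * D - 10) * (-4 * b) - 16 * e * (2 * D - 6)) := by
    calc _ < (e * (D ^ 2 - 9 * D + 6)) *
            (e * ((2 * D - 10) * (D ^ 2 - 9 * D + 6) - 32 * D + 96)) := by
          nlinarith [hpoly, mul_pos he he]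
      _ ≤ _ := mul_le_mul hb hlin (mul_pos he hr).le hx
  nlinarith [mul_nonneg (by linarith : (0 : R) ≤ 2 * D - 10) (sub_nonneg.2 hdisc)]

theorem quadratic_secondSum_neg {a b e D : R} (he : 0 < e) (hdisc : b ^ 2 ≤ 4 * a * e)
    (hD : 12 ≤ D) (h1 : D * e ≤ a + b + e) :
    D * (D - 1) * e - 2 * (D - 1) * (a + b + e) + 2 * (4 * a + 2 * b + e) < 0 := by
  rcases lt_or_ge (-4 * b) (e * (D ^ 2 - 9 * D + 6)) with hb | hb
  · exact quadratic_secondSum_neg_of_slope_lt (by linarith) hb h1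
  · exact quadratic_secondSum_neg_of_slope_ge he hdisc hD hb

theorem stmt_9_general (a b e : ℤ) (he : 0 < e)
    (hd : b ^ 2 ≤ 4 * a * e)
    (h : ℕ → ℤ) (hh : ∀ j : ℕ, h j = a * j ^ 2 + b * j + e) :
    ∀ d : ℕ, 12 ≤ d → ∃ k : ℕ, k ≤ d ∧
      (∑ j ∈ Finset.range (k + 1), (-1 : ℤ) ^ (k - j) * (Nat.choose (d - j) (k - j)) * h j) < 0 := by
  intro d hd12
  by_cases h1 : altBinomialSum h d 1 < 0
  · exact ⟨1, by omega, h1⟩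
  refine ⟨2, by omega, ?_⟩
  have h0e : h 0 = e := by simp [hh]
  have h1e : h 1 = a + b + e := by simp [hh]
  have h2e : h 2 = 4 * a + 2 * b + e := by rw [hh]; push_cast; ring
  rw [altBinomialSum_one, h0e, h1e, not_lt, sub_nonneg] at h1
  have hS2 := two_mul_altBinomialSum_two h d (by omega)
  rw [h0e, h1e, h2e] at hS2
  have hneg := quadratic_secondSum_neg he hd (by exact_mod_cast hd12) h1
  change altBinomialSum h d 2 < 0
  linarith

theorem stmt_9 (a b e : ℤ) (ha : 0 < a) (he : 0 < e) (hb : b < 0)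
    (hd : b ^ 2 ≤ 4 * a * e)
    (h : ℕ → ℤ) (hh : ∀ j : ℕ, h j = a * j ^ 2 + b * j + e)
    (hnn : ∀ j : ℕ, 0 ≤ h j) :
    ∀ d : ℕ, 12 ≤ d → ∃ k : ℕ, k ≤ d ∧
      (∑ j ∈ Finset.range (k + 1), (-1 : ℤ) ^ (k - j) * (Nat.choose (d - j) (k - j)) * h j) < 0 :=
  stmt_9_general a b e he hd h hh
end

section
/- For any function h : ℤ≥0 → ℤ≥0 of the form h(j) = a*j^2 + b*j + e with integers a > 0, e > 0, and arbitrary integer b, we have hdepth(h) ≤ 13. -/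
/-!
Pascal's rule `C(d+1-j, k+1-j) = C(d-j, k+1-j) + C(d-j, k-j)` gives
`S(d+1, k+1) = S(d, k+1) - S(d, k)` for the alternating sums `S(d, k)` defining hdepth, so
nonnegativity of all `S(d+1, ·)` forces nonnegativity of all `S(d, ·)`: the set of admissible
depths is downward closed. It therefore suffices to treat `d = 14`, where for a quadratic `h`
the identity `20 S(14,1) + 7 S(14,2) + S(14,3) = -4a - 4e < 0` rules out depth `14`.
-/

def hdepthSum (h : ℕ → ℤ) (d k : ℕ) : ℤ :=
  ∑ j ∈ Finset.range (k + 1), (-1 : ℤ) ^ (k - j) * (Nat.choose (d - j) (k - j)) * h j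

namespace hdepthSum

variable (h : ℕ → ℤ)

@[simp]
lemma zero_right (d : ℕ) : hdepthSum h d 0 = h 0 := by
  simp [hdepthSum]

lemma succ_succ {d k : ℕ} (hk : k + 1 ≤ d) :
    hdepthSum h (d + 1) (k + 1) = hdepthSum h d (k + 1) - hdepthSum h d k := by
  have pascal : ∀ j ∈ Finset.range (k + 1),
      (-1 : ℤ) ^ (k + 1 - j) * (Nat.choose (d + 1 - j) (k + 1 - j)) * h j
        = (-1 : ℤ) ^ (k + 1 - j) * (Nat.choose (d - j) (k + 1 - j)) * h j
          - (-1 : ℤ) ^ (k - j) * (Nat.choose (d - j) (k - j)) * h j := by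
    intro j hj
    have hjk : j ≤ k := Nat.lt_succ_iff.mp (Finset.mem_range.mp hj)
    rw [show d + 1 - j = d - j + 1 by omega, show k + 1 - j = k - j + 1 by omega,
      Nat.choose_succ_succ, pow_succ]
    push_cast
    ring
  unfold hdepthSum
  rw [Finset.sum_range_succ (n := k + 1), Finset.sum_range_succ (n := k + 1),
    Finset.sum_congr rfl pascal, Finset.sum_sub_distrib]
  simp only [Nat.sub_self, pow_zero, Nat.choose_zero_right]
  ring

lemma nonneg_of_succ {d : ℕ} (H : ∀ k ≤ d + 1, 0 ≤ hdepthSum h (d + 1) k) :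
    ∀ k ≤ d, 0 ≤ hdepthSum h d k := by
  intro k hk
  induction k with
  | zero => simpa using H 0 (Nat.zero_le _)
  | succ k ih =>
    have := succ_succ h hk
    linarith [H (k + 1) (by omega), ih (by omega)]

lemma nonneg_of_le {d d' : ℕ} (hdd' : d ≤ d') (H : ∀ k ≤ d', 0 ≤ hdepthSum h d' k) :
    ∀ k ≤ d, 0 ≤ hdepthSum h d k := by
  induction d', hdd' using Nat.le_induction with
  | base => exact H
  | succ d' _ ih => exact ih (nonneg_of_succ h H)

lemma fourteen_quadratic {a b e : ℤ} (hh : ∀ j : ℕ, h j = a * j ^ 2 + b * j + e) :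
    20 * hdepthSum h 14 1 + 7 * hdepthSum h 14 2 + hdepthSum h 14 3 = -4 * a - 4 * e := by
  simp [hdepthSum, Finset.sum_range_succ, hh, Nat.choose]
  ring

end hdepthSum

theorem stmt_13_general (a b e : ℤ) (ha : 0 < a) (he : 0 < e)
    (h : ℕ → ℤ) (hh : ∀ j : ℕ, h j = a * j ^ 2 + b * j + e) :
    ∀ d : ℕ, 14 ≤ d → ∃ k : ℕ, k ≤ d ∧
      (∑ j ∈ Finset.range (k + 1), (-1 : ℤ) ^ (k - j) * (Nat.choose (d - j) (k - j)) * h j) < 0 := by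
  intro d hd
  by_contra! hdepth
  have H := hdepthSum.nonneg_of_le h hd hdepth
  linarith [H 1 (by norm_num), H 2 (by norm_num), H 3 (by norm_num),
    hdepthSum.fourteen_quadratic h hh]

theorem stmt_13 (a b e : ℤ) (ha : 0 < a) (he : 0 < e)
    (h : ℕ → ℤ) (hh : ∀ j : ℕ, h j = a * j ^ 2 + b * j + e)
    (hnn : ∀ j : ℕ, 0 ≤ h j) :
    ∀ d : ℕ, 14 ≤ d → ∃ k : ℕ, k ≤ d ∧
      (∑ j ∈ Finset.range (k + 1), (-1 : ℤ) ^ (k - j) * (Nat.choose (d - j) (k - j)) * h j) < 0 :=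
  stmt_13_general a b e ha he h hh
end

section
/- Let k ≥ 5 be an integer and h(j) = k^2*j^2 + (k - k^2)*j + 1. Then β_j^5(h) ≥ 0 for all 0 ≤ j ≤ 5 and β_3^6(h) < 0; consequently hdepth(h) = 5. -/
/-!
For `d = 5` the numbers `β_j^5(h)`, `j = 0, …, 5`, are `1, k - 4, 2k² - 2k + 7, 3k - 6, 6k² + 3,
12k² + 3k`, all nonnegative for `k ≥ 4`. For `d = n + 6` one finds
`6 β_3^d(h) = -12(n+1)k² + 3(n² + 5n + 10)k - (n+3)(n² + 9n + 26)`, a quadratic in `k` with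
negative leading coefficient and negative discriminant, so `β_3^d(h) < 0` for every `d ≥ 6`.
-/

open Finset

def beta {R : Type*} [CommRing R] (h : ℕ → R) (d j : ℕ) : R :=
  ∑ i ∈ range (j + 1), (-1 : R) ^ (j - i) * (Nat.choose (d - i) (j - i)) * h i

theorem Nat.cast_choose_two_mul {R : Type*} [CommRing R] (n : ℕ) :
    (n.choose 2 : R) * 2 = n * (n - 1) := by
  induction n with
  | zero => simp
  | succ n ih =>
    rw [Nat.choose_succ_succ, Nat.choose_one_right]
    push_cast
    linear_combination ih

theorem Nat.cast_choose_three_mul {R : Type*} [CommRing R] (n : ℕ) :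
    (n.choose 3 : R) * 6 = n * (n - 1) * (n - 2) := by
  induction n with
  | zero => simp
  | succ n ih =>
    rw [Nat.choose_succ_succ]
    push_cast
    linear_combination ih + 3 * Nat.cast_choose_two_mul (R := R) n

theorem six_mul_beta_three {R : Type*} [CommRing R] (h : ℕ → R) {d : ℕ} (hd : 2 ≤ d) :
    6 * beta h d 3 = -(d * (d - 1) * (d - 2)) * h 0 + 3 * ((d - 1) * (d - 2)) * h 1
      - 6 * (d - 2) * h 2 + 6 * h 3 := by
  obtain ⟨n, rfl⟩ : ∃ n, d = n + 2 := ⟨d - 2, by omega⟩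
  have c3 := Nat.cast_choose_three_mul (R := R) (n + 2)
  have c2 := Nat.cast_choose_two_mul (R := R) (n + 1)
  simp only [beta, sum_range_succ, range_zero, sum_empty]
  norm_num [Nat.choose_one_right] at c2 c3 ⊢
  linear_combination (-h 0) * c3 + 3 * h 1 * c2

def quadHilb (k : ℤ) (j : ℕ) : ℤ := k ^ 2 * j ^ 2 + (k - k ^ 2) * j + 1

theorem beta_quadHilb_five_nonneg {k : ℤ} (hk : 4 ≤ k) {j : ℕ} (hj : j ≤ 5) :
    0 ≤ beta (quadHilb k) 5 j := by
  interval_cases j <;> simp [beta, quadHilb, sum_range_succ, Nat.choose] <;> nlinarith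

theorem beta_quadHilb_three_neg (k : ℤ) {d : ℕ} (hd : 6 ≤ d) : beta (quadHilb k) d 3 < 0 := by
  obtain ⟨n, rfl⟩ : ∃ n, d = n + 6 := ⟨d - 6, by omega⟩
  have h6 := six_mul_beta_three (quadHilb k) (d := n + 6) (by omega)
  simp only [quadHilb] at h6
  push_cast at h6
  have hn : (0 : ℤ) ≤ n := n.cast_nonneg
  -- completing the square in `k` after multiplying by `48(n+1)`
  nlinarith [sq_nonneg (24 * (n + 1) * k - 3 * (n ^ 2 + 5 * n + 10)), mul_nonneg hn hn,
    mul_nonneg (mul_nonneg hn hn) hn]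

theorem stmt_14 (k : ℤ) (hk : 5 ≤ k)
    (h : ℕ → ℤ) (hh : ∀ j : ℕ, h j = k ^ 2 * j ^ 2 + (k - k ^ 2) * j + 1) :
    (∀ j : ℕ, j ≤ 5 →
      0 ≤ ∑ i ∈ Finset.range (j + 1), (-1 : ℤ) ^ (j - i) * (Nat.choose (5 - i) (j - i)) * h i) ∧
    (∑ i ∈ Finset.range 4, (-1 : ℤ) ^ (3 - i) * (Nat.choose (6 - i) (3 - i)) * h i) < 0 ∧
    (∀ d : ℕ,
      (∀ j : ℕ, j ≤ d →
        0 ≤ ∑ i ∈ Finset.range (j + 1), (-1 : ℤ) ^ (j - i) * (Nat.choose (d - i) (j - i)) * h i) →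
      d ≤ 5) := by
  obtain rfl : h = quadHilb k := funext hh
  refine ⟨fun j hj => beta_quadHilb_five_nonneg (by linarith) hj,
    beta_quadHilb_three_neg k le_rfl, fun d hd => ?_⟩
  by_contra! hd6
  exact (beta_quadHilb_three_neg k hd6).not_ge (hd 3 (by omega))
end

section
/- Let α, β, γ be real numbers with α > 0, γ > 0, β < 0, and β^2 ≤ 3*α*γ. Then 15α + 7β + 3γ ≤ s0*(α + β + γ), where s0 = 39 + 16√3. -/
theorem stmt_16 (α β γ : ℝ) (hα : 0 < α) (hγ : 0 < γ) (hβ : β < 0)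
    (h : β ^ 2 ≤ 3 * α * γ) :
    15 * α + 7 * β + 3 * γ ≤ (39 + 16 * Real.sqrt 3) * (α + β + γ) := by
  set s := Real.sqrt 3 with hs
  have hs2 : s ^ 2 = 3 := Real.sq_sqrt (by norm_num)
  have hs1 : 1 ≤ s := by nlinarith [Real.sqrt_nonneg 3]
  set t := Real.sqrt (3 * α * γ) with htdef
  have ht2 : t ^ 2 = 3 * α * γ := Real.sq_sqrt (by positivity)
  have ht0 : 0 ≤ t := Real.sqrt_nonneg _
  have hβt : -t ≤ β := by nlinarith
  have hX : 0 < (24 + 16 * s) * α + (36 + 16 * s) * γ := by nlinarith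
  have h1 : ((32 + 16 * s) * t) ^ 2 ≤ ((24 + 16 * s) * α + (36 + 16 * s) * γ) ^ 2 := by
    nlinarith [sq_nonneg ((24 + 16 * s) * α - (36 + 16 * s) * γ), mul_pos hα hγ]
  have key : (24 + 16 * s) * α + (36 + 16 * s) * γ ≥ (32 + 16 * s) * t := by
    nlinarith [h1, hX]
  nlinarith [key, hβt, hs1]
end

section
/- Let α, β, γ be real numbers with α > 0, γ > 0, β < 0, β^2 ≤ 3*α*γ, and α + β + γ ≥ 67. Then (α+β+γ)^2 - 15α - 7β - 3γ - 7/4 > 1/4. -/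
theorem stmt_17 (α β γ : ℝ) (hα : 0 < α) (hγ : 0 < γ) (hβ : β < 0)
    (h : β ^ 2 ≤ 3 * α * γ) (ht : 67 ≤ α + β + γ) :
    (α + β + γ) ^ 2 - 15 * α - 7 * β - 3 * γ - 7 / 4 > 1 / 4 := by
  set s := α + β + γ with hs
  have hb2 : 4 * β ^ 2 ≤ 3 * (s - β) ^ 2 := by nlinarith [sq_nonneg (α - γ)]
  have hbs : -β ≤ 6.47 * s := by nlinarith [sq_nonneg (-β - 6.47 * s), sq_nonneg s]
  nlinarith
end

section
/- Let h(j) = a*j^3 + b*j^2 + c*j + e be a function from ℤ≥0 to ℤ≥0 with integers a > 0, e > 0, b < 0, and b^2 ≤ 3*a*c. Then hdepth(h) ≤ 67. -/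
/-!
Write `S(d, k)` for `altChooseSum h d k`. Pascal's rule gives `S(d+1, k+1) = S(d, k+1) - S(d, k)`,
so nonnegativity of all `S(d, k)`, `k ≤ d`, passes down to every smaller depth and it suffices to
refute depth `68`. For the cubic `h` one has
`205677204 S(68,1) + 19623477 S(68,2) + 949346 S(68,3) + 20705 S(68,4) = -313659 (a - b + c + e)`,
which is negative because `b < 0` and `c > 0` (as `0 < b² ≤ 3ac`).
-/

def altChooseSum (h : ℕ → ℤ) (d k : ℕ) : ℤ :=
  ∑ j ∈ Finset.range (k + 1), (-1 : ℤ) ^ (k - j) * (Nat.choose (d - j) (k - j)) * h j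

namespace altChooseSum

variable (h : ℕ → ℤ)

@[simp]
lemma zero_right (d : ℕ) : altChooseSum h d 0 = h 0 := by
  simp [altChooseSum]

lemma succ_succ {d k : ℕ} (hk : k ≤ d) :
    altChooseSum h (d + 1) (k + 1) = altChooseSum h d (k + 1) - altChooseSum h d k := by
  unfold altChooseSum
  rw [Finset.sum_range_succ, Finset.sum_range_succ (n := k + 1), Nat.add_sub_add_right,
    add_sub_right_comm, ← Finset.sum_sub_distrib]
  congr 1
  · refine Finset.sum_congr rfl fun j hj => ?_
    have hjk : j ≤ k := Nat.lt_succ_iff.mp (Finset.mem_range.mp hj)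
    rw [show d + 1 - j = d - j + 1 by omega, show k + 1 - j = k - j + 1 by omega,
      Nat.choose_succ_succ, pow_succ]
    push_cast
    ring
  · simp

variable {h}

lemma nonneg_of_succ {d : ℕ} (H : ∀ k ≤ d + 1, 0 ≤ altChooseSum h (d + 1) k) :
    ∀ k ≤ d, 0 ≤ altChooseSum h d k := by
  intro k hk
  induction k with
  | zero => simpa using H 0 (Nat.zero_le _)
  | succ k ih =>
    have hstep := succ_succ h (Nat.le_of_succ_le hk)
    linarith [H (k + 1) (by omega), ih (Nat.le_of_succ_le hk)]

lemma nonneg_of_le {m n : ℕ} (hmn : m ≤ n) (H : ∀ k ≤ n, 0 ≤ altChooseSum h n k) :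
    ∀ k ≤ m, 0 ≤ altChooseSum h m k := by
  induction n, hmn using Nat.le_induction with
  | base => exact H
  | succ n _ ih => exact ih (nonneg_of_succ H)

end altChooseSum

lemma cubic_altChooseSum_sixtyEight_combination (a b c e : ℤ) (h : ℕ → ℤ)
    (hh : ∀ j : ℕ, h j = a * j ^ 3 + b * j ^ 2 + c * j + e) :
    205677204 * altChooseSum h 68 1 + 19623477 * altChooseSum h 68 2
      + 949346 * altChooseSum h 68 3 + 20705 * altChooseSum h 68 4
      = -313659 * (a - b + c + e) := by
  simp only [altChooseSum, Finset.sum_range_succ, Finset.sum_range_zero, hh]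
  norm_num [Nat.choose]
  ring

lemma cubic_exists_altChooseSum_sixtyEight_neg (a b c e : ℤ) (ha : 0 < a) (he : 0 < e)
    (hb : b < 0) (hd : b ^ 2 ≤ 3 * a * c) (h : ℕ → ℤ)
    (hh : ∀ j : ℕ, h j = a * j ^ 3 + b * j ^ 2 + c * j + e) :
    ∃ k ≤ 4, altChooseSum h 68 k < 0 := by
  have hc : 0 < c := by nlinarith [mul_pos_of_neg_of_neg hb hb]
  by_contra! H
  have hcomb := cubic_altChooseSum_sixtyEight_combination a b c e h hh
  linarith [H 1 (by norm_num), H 2 (by norm_num), H 3 (by norm_num), H 4 (by norm_num)]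

theorem stmt_18_general (a b c e : ℤ) (ha : 0 < a) (he : 0 < e) (hb : b < 0)
    (hd : b ^ 2 ≤ 3 * a * c)
    (h : ℕ → ℤ) (hh : ∀ j : ℕ, h j = a * j ^ 3 + b * j ^ 2 + c * j + e) :
    ∀ d : ℕ, 68 ≤ d → ∃ k : ℕ, k ≤ d ∧
      (∑ j ∈ Finset.range (k + 1), (-1 : ℤ) ^ (k - j) * (Nat.choose (d - j) (k - j)) * h j) < 0 := by
  intro d hd68
  by_contra! H
  obtain ⟨k, hk, hneg⟩ := cubic_exists_altChooseSum_sixtyEight_neg a b c e ha he hb hd h hh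
  exact (altChooseSum.nonneg_of_le hd68 H k (by omega)).not_gt hneg

theorem stmt_18 (a b c e : ℤ) (ha : 0 < a) (he : 0 < e) (hb : b < 0)
    (hd : b ^ 2 ≤ 3 * a * c)
    (h : ℕ → ℤ) (hh : ∀ j : ℕ, h j = a * j ^ 3 + b * j ^ 2 + c * j + e)
    (hnn : ∀ j : ℕ, 0 ≤ h j) :
    ∀ d : ℕ, 68 ≤ d → ∃ k : ℕ, k ≤ d ∧
      (∑ j ∈ Finset.range (k + 1), (-1 : ℤ) ^ (k - j) * (Nat.choose (d - j) (k - j)) * h j) < 0 :=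
  stmt_18_general a b c e ha he hb hd h hh
end
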